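/- arXiv:1704.08042 — 9 statements merged into one kernel-verified Lean document; each statement's English description precedes it below -/
import Mathlib

section
/- A ℂ-linear map d : ℂ³ → ℂ³ is a derivation of the ω-Lie algebra L₁ if and only if there exist a, b ∈ ℂ such that d(x) = a·z, d(y) = −a·z, and d(z) = b·z. In particular, the space of derivations of L₁ is 2-dimensional. -/
noncomputable section

/-- The underlying space ℂ³ of the ω-Lie algebra L₁. -/
abbrev V3 : Type := Fin 3 → ℂ

/-- The basis vector x = e₁. -/
def vx : V3 := ![1, 0, 0]

/-- The basis vector y = e₂. -/
def vy : V3 := ![0, 1, 0]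

/-- The basis vector z = e₃. -/
def vz : V3 := ![0, 0, 1]

/-- The space of derivations of a bilinear bracket on ℂ³, as a submodule of the
space of ℂ-linear endomorphisms of ℂ³. -/
def derivations (b : V3 →ₗ[ℂ] V3 →ₗ[ℂ] V3) : Submodule ℂ (V3 →ₗ[ℂ] V3) where
  carrier := {d | ∀ u v : V3, d (b u v) = b (d u) v + b u (d v)}
  zero_mem' := by
    simp only [Set.mem_setOf_eq]
    intro u v
    simp
  add_mem' := by
    intro d e hd he
    simp only [Set.mem_setOf_eq] at *
    intro u v
    simp only [LinearMap.add_apply, hd u v, he u v, map_add]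
    abel
  smul_mem' := by
    intro c d hd
    simp only [Set.mem_setOf_eq] at *
    intro u v
    simp only [LinearMap.smul_apply, hd u v, map_smul, smul_add]

lemma decomp (u : V3) : u = u 0 • vx + u 1 • vy + u 2 • vz := by
  funext i; fin_cases i <;> simp [vx, vy, vz]

def Pmap : V3 →ₗ[ℂ] V3 where
  toFun u := (u 0 - u 1) • vz
  map_add' u v := by simp [add_smul]; module
  map_smul' c u := by simp [smul_smul]; module

def Qmap : V3 →ₗ[ℂ] V3 where
  toFun u := u 2 • vz
  map_add' u v := by simp [add_smul]
  map_smul' c u := by simp [smul_smul]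

set_option maxHeartbeats 1000000

/-- A ℂ-linear map `d : ℂ³ → ℂ³` is a derivation of the ω-Lie algebra L₁
(with `[x,y] = y`, `[x,z] = 0`, `[y,z] = z`) if and only if there are `a, c ∈ ℂ` with
`d x = a • z`, `d y = -a • z`, `d z = c • z`; in particular the space of derivations of
L₁ is 2-dimensional. -/
theorem derivations_L1
    (b : V3 →ₗ[ℂ] V3 →ₗ[ℂ] V3)
    (hskew : ∀ u v : V3, b u v = - b v u)
    (hxy : b vx vy = vy) (hxz : b vx vz = 0) (hyz : b vy vz = vz) :
    (∀ d : V3 →ₗ[ℂ] V3,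
        d ∈ derivations b ↔
          ∃ a c : ℂ, d vx = a • vz ∧ d vy = (-a) • vz ∧ d vz = c • vz) ∧
    Module.finrank ℂ (derivations b) = 2 := by
  have hxx : b vx vx = 0 := by
    have h := hskew vx vx
    funext i
    have h2 := congrFun h i
    simp only [Pi.neg_apply] at h2
    have : b vx vx i = 0 := by linear_combination h2 / 2
    simpa using this
  have hyy : b vy vy = 0 := by
    have h := hskew vy vy
    funext i
    have h2 := congrFun h i
    simp only [Pi.neg_apply] at h2
    have : b vy vy i = 0 := by linear_combination h2 / 2
    simpa using this
  have hzz : b vz vz = 0 := by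
    have h := hskew vz vz
    funext i
    have h2 := congrFun h i
    simp only [Pi.neg_apply] at h2
    have : b vz vz i = 0 := by linear_combination h2 / 2
    simpa using this
  have hyx : b vy vx = -vy := by rw [hskew vy vx, hxy]
  have hzx : b vz vx = 0 := by rw [hskew vz vx, hxz, neg_zero]
  have hzy : b vz vy = -vz := by rw [hskew vz vy, hyz]
  have hb : ∀ u v : V3,
      b u v = (u 0 * v 1 - u 1 * v 0) • vy + (u 1 * v 2 - u 2 * v 1) • vz := by
    intro u v
    conv_lhs => rw [decomp u, decomp v]
    simp only [map_add, map_smul, LinearMap.add_apply, LinearMap.smul_apply,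
      hxy, hxz, hyz, hxx, hyy, hzz, hyx, hzx, hzy, smul_zero, smul_neg]
    module
  have hiff : ∀ d : V3 →ₗ[ℂ] V3,
      d ∈ derivations b ↔
        ∃ a c : ℂ, d vx = a • vz ∧ d vy = (-a) • vz ∧ d vz = c • vz := by
    intro d
    constructor
    · intro hd
      have hd' : ∀ u v : V3, d (b u v) = b (d u) v + b u (d v) := hd
      have e1 := hd' vx vy
      have e2 := hd' vx vz
      have e3 := hd' vy vz
      rw [hxy, hb (d vx) vy, hb vx (d vy)] at e1
      rw [hxz, hb (d vx) vz, hb vx (d vz)] at e2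
      rw [hyz, hb (d vy) vz, hb vy (d vz)] at e3
      have c10 := congrFun e1 0
      have c11 := congrFun e1 1
      have c12 := congrFun e1 2
      have c21 := congrFun e2 1
      have c22 := congrFun e2 2
      have c30 := congrFun e3 0
      have c31 := congrFun e3 1
      have c32 := congrFun e3 2
      simp [vx, vy, vz] at c10 c11 c12 c21 c22 c30 c31 c32
      refine ⟨d vx 2, d vz 2, ?_, ?_, ?_⟩
      · funext i; fin_cases i
        · simp [vx, vz]; linear_combination c11
        · simp [vx, vz]; linear_combination -c22
        · simp [vx, vz]
      · funext i; fin_cases i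
        · simp [vx, vy, vz]; linear_combination c10
        · simp [vx, vy, vz]; linear_combination c32
        · simp [vx, vy, vz]; linear_combination c12
      · funext i; fin_cases i
        · simp [vz]; linear_combination c30
        · simp [vz]; linear_combination c31 - c30
        · simp [vz]
    · rintro ⟨a, c, h1, h2, h3⟩
      have hdu : ∀ w : V3, d w = (a * (w 0 - w 1) + c * w 2) • vz := by
        intro w
        conv_lhs => rw [decomp w]
        simp only [map_add, map_smul, h1, h2, h3]
        funext i; fin_cases i <;> simp [vz] <;> ring
      intro u v
      simp only [hb, hdu]
      funext i; fin_cases i <;> simp [vy, vz] <;> ring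
  refine ⟨hiff, ?_⟩
  have hval : ∀ a c : ℂ, ((a • Pmap + c • Qmap : V3 →ₗ[ℂ] V3) vx = a • vz)
      ∧ ((a • Pmap + c • Qmap : V3 →ₗ[ℂ] V3) vy = (-a) • vz)
      ∧ ((a • Pmap + c • Qmap : V3 →ₗ[ℂ] V3) vz = c • vz) := by
    intro a c
    refine ⟨?_, ?_, ?_⟩ <;>
      simp [Pmap, Qmap, vx, vy, vz] <;>
      funext i <;> fin_cases i <;> simp <;> ring
  set F0 : (ℂ × ℂ) →ₗ[ℂ] (V3 →ₗ[ℂ] V3) :=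
    (LinearMap.fst ℂ ℂ ℂ).smulRight Pmap + (LinearMap.snd ℂ ℂ ℂ).smulRight Qmap with hF0
  have hF0app : ∀ p : ℂ × ℂ, F0 p = p.1 • Pmap + p.2 • Qmap := by
    intro p; simp [hF0]
  have hFmem : ∀ p : ℂ × ℂ, F0 p ∈ derivations b := by
    intro p
    rw [hF0app]
    exact (hiff _).mpr ⟨p.1, p.2, (hval p.1 p.2).1, (hval p.1 p.2).2.1, (hval p.1 p.2).2.2⟩
  set F : (ℂ × ℂ) →ₗ[ℂ] derivations b := F0.codRestrict (derivations b) hFmem with hF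
  have hinj : Function.Injective F := by
    intro p q h
    have h' : F0 p = F0 q := congrArg Subtype.val h
    rw [hF0app, hF0app] at h'
    have hx2 := congrFun (congrArg (fun f : V3 →ₗ[ℂ] V3 => f vx) h') 2
    have hz2 := congrFun (congrArg (fun f : V3 →ₗ[ℂ] V3 => f vz) h') 2
    simp [Pmap, Qmap, vx, vz] at hx2 hz2
    exact Prod.ext hx2 hz2
  have hsurj : Function.Surjective F := by
    rintro ⟨d, hd⟩
    obtain ⟨a, c, h1, h2, h3⟩ := (hiff d).mp hd
    refine ⟨(a, c), ?_⟩
    apply Subtype.ext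
    show F0 (a, c) = d
    rw [hF0app]
    apply LinearMap.ext
    intro u
    conv_rhs => rw [decomp u]
    simp only [map_add, map_smul, h1, h2, h3, LinearMap.add_apply,
      LinearMap.smul_apply]
    simp only [Pmap, Qmap, LinearMap.coe_mk, AddHom.coe_mk]
    funext i; fin_cases i <;> simp [vz] <;> ring
  have e := LinearEquiv.ofBijective F ⟨hinj, hsurj⟩
  rw [← e.finrank_eq]
  simp
end
end

section
/- Every derivation of the ω-Lie algebra L₁ is an ω-derivation, i.e. if d : ℂ³ → ℂ³ is a ℂ-linear map with d[u,v] = [d(u),v] + [u,d(v)] for all u,v ∈ ℂ³, then ω(d(u),v) + ω(u,d(v)) = 0 for all u,v ∈ ℂ³. Hence Der_ω(L₁) = Der(L₁). -/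
noncomputable section

/-- Every derivation of the ω-Lie algebra L₁ (with `[x,y] = y`, `[x,z] = 0`,
`[y,z] = z`, `ω(x,y) = 1`, `ω(x,z) = ω(y,z) = 0`) is an ω-derivation; hence
`Der_ω(L₁) = Der(L₁)`. -/
theorem every_derivation_of_L1_is_omega_derivation
    (b : V3 →ₗ[ℂ] V3 →ₗ[ℂ] V3) (w : V3 →ₗ[ℂ] V3 →ₗ[ℂ] ℂ)
    (hskew : ∀ u v : V3, b u v = - b v u)
    (hwskew : ∀ u v : V3, w u v = - w v u)
    (hxy : b vx vy = vy) (hxz : b vx vz = 0) (hyz : b vy vz = vz)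
    (hwxy : w vx vy = 1) (hwxz : w vx vz = 0) (hwyz : w vy vz = 0)
    (d : V3 →ₗ[ℂ] V3)
    (hd : ∀ u v : V3, d (b u v) = b (d u) v + b u (d v)) :
    ∀ u v : V3, w (d u) v + w u (d v) = 0 := by
  have hrep : ∀ v : V3, v = v 0 • vx + v 1 • vy + v 2 • vz := by
    intro v; funext i; fin_cases i <;> simp [vx, vy, vz]
  have hbv : ∀ v : V3, b v v = 0 := by
    intro v
    have h := hskew v v
    have h2 : (2 : ℂ) • b v v = 0 := by rw [two_smul]; nth_rewrite 1 [h]; simp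
    simpa using (smul_eq_zero.mp h2).resolve_left (by norm_num)
  have hyx : b vy vx = -vy := by rw [hskew, hxy]
  have hzx : b vz vx = 0 := by rw [hskew, hxz]; simp
  have hzy : b vz vy = -vz := by rw [hskew, hyz]
  have hwv : ∀ v : V3, w v v = 0 := by
    intro v
    have h := hwskew v v
    linear_combination h / 2
  have hwyx : w vy vx = -1 := by rw [hwskew, hwxy]
  have hwzx : w vz vx = 0 := by rw [hwskew, hwxz]; simp
  have hwzy : w vz vy = 0 := by rw [hwskew, hwyz]; simp
  -- derivation equations
  have e1 : d vy = b (d vx) vy + b vx (d vy) := by rw [← hd, hxy]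
  have e2 : (0 : V3) = b (d vx) vz + b vx (d vz) := by rw [← hd, hxz, map_zero]
  have e3 : d vz = b (d vy) vz + b vy (d vz) := by rw [← hd, hyz]
  rw [hrep (d vx), hrep (d vy)] at e1
  rw [hrep (d vx), hrep (d vz)] at e2
  rw [hrep (d vy), hrep (d vz)] at e3
  simp only [map_add, map_smul, LinearMap.add_apply, LinearMap.smul_apply,
    hxy, hxz, hyz, hyx, hzx, hzy, hbv, smul_zero, add_zero, zero_add, smul_neg] at e1 e2 e3
  have c1 := congrFun e1 0
  have c2 := congrFun e1 1
  have c3 := congrFun e2 1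
  have c4 := congrFun e2 2
  have c5 := congrFun e3 0
  have c7 := congrFun e3 2
  simp [vx, vy, vz] at c1 c2 c3 c4 c5 c7
  have c1' : d vy 0 = 0 := c1
  have c2' : d vx 0 = 0 := c2
  have c3' : d vz 1 = 0 := c3.symm
  have c4' : d vx 1 = 0 := c4.symm
  have c5' : d vz 0 = 0 := c5
  have c7' : d vy 1 = 0 := c7
  have du0 : ∀ u : V3, d u 0 = 0 := by
    intro u
    conv_lhs => rw [hrep u]
    simp only [map_add, map_smul, Pi.add_apply, Pi.smul_apply, smul_eq_mul,
      c1', c2', c5', mul_zero, add_zero]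
  have du1 : ∀ u : V3, d u 1 = 0 := by
    intro u
    conv_lhs => rw [hrep u]
    simp only [map_add, map_smul, Pi.add_apply, Pi.smul_apply, smul_eq_mul,
      c3', c4', c7', mul_zero, add_zero]
  have wz : ∀ p : V3, w vz p = 0 := by
    intro p
    rw [hrep p]
    simp only [map_add, map_smul, hwzx, hwzy, hwv, smul_zero, add_zero]
  have wz' : ∀ p : V3, w p vz = 0 := fun p => by rw [hwskew, wz, neg_zero]
  intro u v
  rw [hrep (d u), hrep (d v), du0 u, du1 u, du0 v, du1 v]
  simp only [zero_smul, zero_add, map_smul, LinearMap.smul_apply, wz, wz',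
    smul_zero, add_zero]
end
end

section
/- Fix α ∈ ℂ. A ℂ-linear map d : ℂ³ → ℂ³ is a derivation of the ω-Lie algebra A_α if and only if there exists a ∈ ℂ such that d(x) = 0, d(y) = a·x, and d(z) = (a/2)·x + a·y. In particular, the space of derivations of A_α is 1-dimensional, and any two derivations of A_α commute. -/
noncomputable section

/-- The basic derivation. -/
def d0 : V3 →ₗ[ℂ] V3 where
  toFun u := ![u 1 + u 2 / 2, u 2, 0]
  map_add' u v := by funext i; fin_cases i <;> simp <;> ring
  map_smul' c u := by funext i; fin_cases i <;> simp <;> ring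

lemma d0x : d0 vx = 0 := by funext i; fin_cases i <;> simp [d0, vx]
lemma d0y : d0 vy = vx := by funext i; fin_cases i <;> simp [d0, vx, vy]
lemma d0z : d0 vz = (1/2 : ℂ) • vx + vy := by
  funext i; fin_cases i <;> simp [d0, vx, vy, vz]

lemma ext_basis (f g : V3 →ₗ[ℂ] V3) (h1 : f vx = g vx) (h2 : f vy = g vy)
    (h3 : f vz = g vz) : f = g := by
  apply LinearMap.ext
  intro u
  rw [decomp u]
  simp [map_add, map_smul, h1, h2, h3]

lemma vx_ne_zero : vx ≠ 0 := by
  intro h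
  have := congrFun h 0
  simp [vx] at this

lemma d0_ne_zero : d0 ≠ 0 := by
  intro h
  apply vx_ne_zero
  rw [← d0y, h]
  rfl

/-- A ℂ-linear map `d : ℂ³ → ℂ³` is a derivation of the ω-Lie algebra A_α
(with `[x,y] = x`, `[x,z] = x + y`, `[y,z] = z + α•x`) if and only if there is `a ∈ ℂ`
with `d x = 0`, `d y = a • x`, `d z = (a/2) • x + a • y`; in particular the space of
derivations of A_α is 1-dimensional and any two derivations of A_α commute. -/
theorem derivations_A_alpha (α : ℂ)
    (b : V3 →ₗ[ℂ] V3 →ₗ[ℂ] V3)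
    (hskew : ∀ u v : V3, b u v = - b v u)
    (hxy : b vx vy = vx) (hxz : b vx vz = vx + vy) (hyz : b vy vz = vz + α • vx) :
    (∀ d : V3 →ₗ[ℂ] V3,
        d ∈ derivations b ↔
          ∃ a : ℂ, d vx = 0 ∧ d vy = a • vx ∧ d vz = (a / 2) • vx + a • vy) ∧
    Module.finrank ℂ (derivations b) = 1 ∧
    (∀ d e : V3 →ₗ[ℂ] V3, d ∈ derivations b → e ∈ derivations b → d ∘ₗ e = e ∘ₗ d) := by
  have bzero : ∀ u : V3, b u u = 0 := by
    intro u
    have h2 := eq_neg_iff_add_eq_zero.mp (hskew u u)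
    have h3 : (2 : ℂ) • b u u = 0 := by rw [two_smul]; exact h2
    simpa using (smul_eq_zero.mp h3).resolve_left (by norm_num)
  have hyx : b vy vx = -vx := by rw [hskew vy vx, hxy]
  have hzx : b vz vx = -(vx + vy) := by rw [hskew vz vx, hxz]
  have hzy : b vz vy = -(vz + α • vx) := by rw [hskew vz vy, hyz]
  have hiff : ∀ d : V3 →ₗ[ℂ] V3,
      d ∈ derivations b ↔
        ∃ a : ℂ, d vx = 0 ∧ d vy = a • vx ∧ d vz = (a / 2) • vx + a • vy := by
    intro d
    constructor
    · intro hd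
      have hd' : ∀ u v : V3, d (b u v) = b (d u) v + b u (d v) := hd
      obtain ⟨p, q, r, hdx⟩ : ∃ p q r : ℂ, d vx = p • vx + q • vy + r • vz :=
        ⟨_, _, _, decomp _⟩
      obtain ⟨s, t, c, hdy⟩ : ∃ s t c : ℂ, d vy = s • vx + t • vy + c • vz :=
        ⟨_, _, _, decomp _⟩
      obtain ⟨u, v, w, hdz⟩ : ∃ u v w : ℂ, d vz = u • vx + v • vy + w • vz :=
        ⟨_, _, _, decomp _⟩
      have E1 := hd' vx vy
      have E2 := hd' vx vz
      have E3 := hd' vy vz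
      rw [hxy] at E1
      rw [hxz, map_add] at E2
      rw [hyz, map_add, map_smul] at E3
      simp only [hdx, hdy, hdz] at E1 E2 E3
      simp only [map_add, map_smul, LinearMap.add_apply, LinearMap.smul_apply,
        hxy, hxz, hyz, hyx, hzx, hzy, bzero, smul_zero, map_neg,
        LinearMap.neg_apply] at E1 E2 E3
      have e10 := congrFun E1 0
      have e11 := congrFun E1 1
      have e12 := congrFun E1 2
      have e20 := congrFun E2 0
      have e21 := congrFun E2 1
      have e22 := congrFun E2 2
      have e30 := congrFun E3 0
      have e31 := congrFun E3 1
      have e32 := congrFun E3 2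
      simp [vx, vy, vz] at e10 e11 e12 e20 e21 e22 e30 e31 e32
      have hr : r = 0 := by linear_combination e12 / 2
      subst hr
      have ht : t = 0 := by linear_combination -e32
      subst ht
      have hc : c = 0 := by linear_combination -e10
      subst hc
      have hq : q = 0 := by linear_combination e11
      subst hq
      have hp : p = 0 := by linear_combination e20 + e31 - e21
      subst hp
      have hw : w = 0 := by linear_combination -e21
      have hv : v = s := by linear_combination e31
      have hu : u = s / 2 := by linear_combination (e30 + α * hw) / 2
      refine ⟨s, ?_, ?_, ?_⟩
      · rw [hdx]; simp
      · rw [hdy]; simp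
      · rw [hdz, hu, hv, hw]; simp
    · rintro ⟨a, h1, h2, h3⟩
      intro u v
      obtain ⟨p, q, r, hu⟩ : ∃ p q r : ℂ, u = p • vx + q • vy + r • vz :=
        ⟨_, _, _, decomp _⟩
      obtain ⟨k, l, m, hv⟩ : ∃ k l m : ℂ, v = k • vx + l • vy + m • vz :=
        ⟨_, _, _, decomp _⟩
      subst hu hv
      simp only [map_add, map_smul, LinearMap.add_apply, LinearMap.smul_apply,
        hxy, hxz, hyz, hyx, hzx, hzy, bzero, h1, h2, h3,
        smul_zero, map_zero, zero_add, add_zero, smul_neg, smul_add, map_neg]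
      module
  refine ⟨hiff, ?_, ?_⟩
  · have hspan : derivations b = Submodule.span ℂ {d0} := by
      apply le_antisymm
      · intro d hd
        obtain ⟨a, h1, h2, h3⟩ := (hiff d).mp hd
        apply Submodule.mem_span_singleton.mpr
        refine ⟨a, ?_⟩
        apply ext_basis
        · rw [LinearMap.smul_apply, d0x, smul_zero, h1]
        · rw [LinearMap.smul_apply, d0y, h2]
        · rw [LinearMap.smul_apply, d0z, h3, smul_add, smul_smul, mul_one_div]
      · rw [Submodule.span_le, Set.singleton_subset_iff]
        refine (hiff d0).mpr ⟨1, d0x, by rw [d0y]; simp, by rw [d0z]; norm_num⟩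
    rw [hspan]
    exact finrank_span_singleton d0_ne_zero
  · intro d e hd he
    obtain ⟨a, h1, h2, h3⟩ := (hiff d).mp hd
    obtain ⟨a', g1, g2, g3⟩ := (hiff e).mp he
    apply ext_basis
    · simp [LinearMap.comp_apply, h1, g1]
    · simp [LinearMap.comp_apply, h1, h2, g1, g2, map_smul]
    · simp only [LinearMap.comp_apply, h3, g3, map_add, map_smul, h1, h2, g1, g2,
        smul_zero, zero_add, smul_smul]
      ring_nf
end
end

section
/- A ℂ-linear bijection σ : ℂ³ → ℂ³ is an automorphism of the ω-Lie algebra L₁ if and only if there exist a ∈ ℂ and b ∈ ℂ with b ≠ 0 such that σ(x) = x + a·z, σ(y) = y − a·z, and σ(z) = b·z. -/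
noncomputable section

lemma vx0 : vx 0 = 1 := rfl
lemma vx1 : vx 1 = 0 := rfl
lemma vx2 : vx 2 = 0 := rfl
lemma vy0 : vy 0 = 0 := rfl
lemma vy1 : vy 1 = 1 := rfl
lemma vy2 : vy 2 = 0 := rfl
lemma vz0 : vz 0 = 0 := rfl
lemma vz1 : vz 1 = 0 := rfl
lemma vz2 : vz 2 = 1 := rfl

/-- A ℂ-linear bijection `σ : ℂ³ → ℂ³` is an automorphism of the ω-Lie
algebra L₁ (with `[x,y] = y`, `[x,z] = 0`, `[y,z] = z`) if and only if there are
`a, c ∈ ℂ`, `c ≠ 0`, with `σ x = x + a • z`, `σ y = y - a • z`, `σ z = c • z`. -/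
theorem automorphisms_L1
    (b : V3 →ₗ[ℂ] V3 →ₗ[ℂ] V3)
    (hskew : ∀ u v : V3, b u v = - b v u)
    (hxy : b vx vy = vy) (hxz : b vx vz = 0) (hyz : b vy vz = vz)
    (σ : V3 ≃ₗ[ℂ] V3) :
    (∀ u v : V3, σ (b u v) = b (σ u) (σ v)) ↔
      ∃ a c : ℂ, c ≠ 0 ∧
        σ vx = vx + a • vz ∧ σ vy = vy - a • vz ∧ σ vz = c • vz := by
  have hself : ∀ u : V3, b u u = 0 := by
    intro u
    have h := hskew u u
    have h2 : b u u + b u u = 0 := add_eq_zero_iff_eq_neg.mpr h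
    have h3 : (2 : ℂ) • b u u = 0 := by rw [two_smul]; exact h2
    rcases smul_eq_zero.mp h3 with h | h
    · exact absurd h two_ne_zero
    · exact h
  have hyx : b vy vx = -vy := by rw [hskew vy vx, hxy]
  have hzx : b vz vx = 0 := by rw [hskew vz vx, hxz, neg_zero]
  have hzy : b vz vy = -vz := by rw [hskew vz vy, hyz]
  have bform : ∀ u v : V3,
      b u v = (u 0 * v 1 - u 1 * v 0) • vy + (u 1 * v 2 - u 2 * v 1) • vz := by
    intro u v
    conv_lhs => rw [decomp u, decomp v]
    simp only [map_add, map_smul, LinearMap.add_apply, LinearMap.smul_apply,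
      hxy, hxz, hyz, hyx, hzx, hzy, hself]
    module
  have evsimp : ∀ (p q : ℂ) (i : Fin 3),
      (p • vy + q • vz) i = p * vy i + q * vz i := by
    intro p q i; simp
  constructor
  · intro h
    have e1 := h vx vy
    rw [hxy, bform (σ vx) (σ vy)] at e1
    have e10 := congrFun e1 0
    have e11 := congrFun e1 1
    have e12 := congrFun e1 2
    rw [evsimp, vy0, vz0] at e10
    rw [evsimp, vy1, vz1] at e11
    rw [evsimp, vy2, vz2] at e12
    ring_nf at e10 e11 e12
    have e2 := h vx vz
    rw [hxz, map_zero, bform (σ vx) (σ vz)] at e2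
    have e22 := congrFun e2.symm 2
    rw [evsimp, vy2, vz2] at e22
    simp only [Pi.zero_apply] at e22
    ring_nf at e22
    have e3 := h vy vz
    rw [hyz, bform (σ vy) (σ vz)] at e3
    have e30 := congrFun e3 0
    have e31 := congrFun e3 1
    have e32 := congrFun e3 2
    rw [evsimp, vy0, vz0] at e30
    rw [evsimp, vy1, vz1] at e31
    rw [evsimp, vy2, vz2] at e32
    ring_nf at e30 e31 e32
    -- now everything is in terms of σ vx i, σ vy i, σ vz i
    have hZ1 : σ vz 1 = 0 := by
      rw [e31, e10, e30]; ring
    have hZ2 : σ vz 2 ≠ 0 := by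
      intro hz
      have hzero : σ vz = 0 := by
        funext i; fin_cases i
        · exact e30
        · exact hZ1
        · exact hz
      have : vz = (0 : V3) := σ.injective (by rw [hzero, map_zero])
      have := congrFun this 2
      rw [vz2] at this
      exact one_ne_zero this
    have hX1 : σ vx 1 = 0 := by
      have h1 : σ vx 1 * σ vz 2 = 0 := by
        have := e22
        rw [hZ1] at this
        linear_combination this
      rcases mul_eq_zero.mp h1 with h' | h'
      · exact h'
      · exact absurd h' hZ2
    have hY1 : σ vy 1 = 1 := by
      have h1 : (σ vy 1 - 1) * σ vz 2 = 0 := by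
        rw [hZ1] at e32
        linear_combination -e32
      rcases mul_eq_zero.mp h1 with h' | h'
      · exact sub_eq_zero.mp h'
      · exact absurd h' hZ2
    have hX0 : σ vx 0 = 1 := by
      rw [e10, hY1] at e11
      linear_combination -e11
    have hY2 : σ vy 2 = -(σ vx 2) := by
      rw [hX1, hY1] at e12
      linear_combination e12
    refine ⟨σ vx 2, σ vz 2, hZ2, ?_, ?_, ?_⟩
    · funext i; fin_cases i
      · show σ vx 0 = (vx + σ vx 2 • vz) 0
        simp only [Pi.add_apply, Pi.smul_apply, smul_eq_mul, vx0, vz0]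
        rw [hX0]; ring
      · show σ vx 1 = (vx + σ vx 2 • vz) 1
        simp only [Pi.add_apply, Pi.smul_apply, smul_eq_mul, vx1, vz1]
        rw [hX1]; ring
      · show σ vx 2 = (vx + σ vx 2 • vz) 2
        simp only [Pi.add_apply, Pi.smul_apply, smul_eq_mul, vx2, vz2]
        ring
    · funext i; fin_cases i
      · show σ vy 0 = (vy - σ vx 2 • vz) 0
        simp only [Pi.sub_apply, Pi.smul_apply, smul_eq_mul, vy0, vz0]
        rw [e10]; ring
      · show σ vy 1 = (vy - σ vx 2 • vz) 1
        simp only [Pi.sub_apply, Pi.smul_apply, smul_eq_mul, vy1, vz1]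
        rw [hY1]; ring
      · show σ vy 2 = (vy - σ vx 2 • vz) 2
        simp only [Pi.sub_apply, Pi.smul_apply, smul_eq_mul, vy2, vz2]
        rw [hY2]; ring
    · funext i; fin_cases i
      · show σ vz 0 = (σ vz 2 • vz) 0
        simp only [Pi.smul_apply, smul_eq_mul, vz0]
        rw [e30]; ring
      · show σ vz 1 = (σ vz 2 • vz) 1
        simp only [Pi.smul_apply, smul_eq_mul, vz1]
        rw [hZ1]; ring
      · show σ vz 2 = (σ vz 2 • vz) 2
        simp only [Pi.smul_apply, smul_eq_mul, vz2]
        ring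
  · rintro ⟨a, c, hc, hx, hy, hz⟩
    intro u v
    have coords : ∀ w : V3, σ w 0 = w 0 ∧ σ w 1 = w 1 ∧
        σ w 2 = w 0 * a - w 1 * a + w 2 * c := by
      intro w
      have hw : σ w = w 0 • (vx + a • vz) + w 1 • (vy - a • vz) + w 2 • (c • vz) := by
        conv_lhs => rw [decomp w]
        rw [map_add, map_add, map_smul, map_smul, map_smul, hx, hy, hz]
      refine ⟨?_, ?_, ?_⟩
      · rw [congrFun hw 0]
        simp [vx0, vy0, vz0, vx, vy, vz]
      · rw [congrFun hw 1]
        simp [vx, vy, vz]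
      · rw [congrFun hw 2]
        simp [vx, vy, vz]; ring
    obtain ⟨su0, su1, su2⟩ := coords u
    obtain ⟨sv0, sv1, sv2⟩ := coords v
    rw [bform u v, map_add, map_smul, map_smul, hy, hz,
      bform (σ u) (σ v), su0, su1, su2, sv0, sv1, sv2]
    funext i; fin_cases i
    · show ((u 0 * v 1 - u 1 * v 0) • (vy - a • vz) + (u 1 * v 2 - u 2 * v 1) • (c • vz)) 0
        = ((u 0 * v 1 - u 1 * v 0) • vy
            + ((u 1) * (v 0 * a - v 1 * a + v 2 * c)
              - (u 0 * a - u 1 * a + u 2 * c) * (v 1)) • vz) 0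
      simp only [Pi.add_apply, Pi.sub_apply, Pi.smul_apply, smul_eq_mul,
        vy0, vz0]
      ring
    · show ((u 0 * v 1 - u 1 * v 0) • (vy - a • vz) + (u 1 * v 2 - u 2 * v 1) • (c • vz)) 1
        = ((u 0 * v 1 - u 1 * v 0) • vy
            + ((u 1) * (v 0 * a - v 1 * a + v 2 * c)
              - (u 0 * a - u 1 * a + u 2 * c) * (v 1)) • vz) 1
      simp only [Pi.add_apply, Pi.sub_apply, Pi.smul_apply, smul_eq_mul,
        vy1, vz1]
      ring
    · show ((u 0 * v 1 - u 1 * v 0) • (vy - a • vz) + (u 1 * v 2 - u 2 * v 1) • (c • vz)) 2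
        = ((u 0 * v 1 - u 1 * v 0) • vy
            + ((u 1) * (v 0 * a - v 1 * a + v 2 * c)
              - (u 0 * a - u 1 * a + u 2 * c) * (v 1)) • vz) 2
      simp only [Pi.add_apply, Pi.sub_apply, Pi.smul_apply, smul_eq_mul,
        vy2, vz2]
      ring
end
end

section
/- The automorphism group of the ω-Lie algebra L₁, regarded as the set of invertible 3×3 complex matrices {[[1,0,a],[0,1,−a],[0,0,b]] (acting so that σ(x) = x + a·z, σ(y) = y − a·z, σ(z) = b·z) : a ∈ ℂ, b ∈ ℂ, b ≠ 0}, is a path-connected subset of the invertible 3×3 complex matrices. -/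
/-- The map `(a, b) ↦ [[1,0,a],[0,1,-a],[0,0,b]]` is continuous. -/
lemma aut_L1_matrix_continuous :
    Continuous (fun p : ℂ × ℂ => (!![1, 0, p.1; 0, 1, -p.1; 0, 0, p.2] :
      Matrix (Fin 3) (Fin 3) ℂ)) := by
  apply continuous_matrix
  intro i j
  fin_cases i <;> fin_cases j <;> simp <;> fun_prop

/-- The automorphism group of the ω-Lie algebra L₁, regarded as the set of
invertible 3×3 complex matrices `[[1,0,a],[0,1,-a],[0,0,b]]` with `a, b ∈ ℂ`, `b ≠ 0`,
consists of invertible matrices and is path-connected. -/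
theorem aut_L1_path_connected :
    (∀ A ∈ {A : Matrix (Fin 3) (Fin 3) ℂ |
        ∃ a b : ℂ, b ≠ 0 ∧ A = !![1, 0, a; 0, 1, -a; 0, 0, b]}, IsUnit A) ∧
    IsPathConnected {A : Matrix (Fin 3) (Fin 3) ℂ |
        ∃ a b : ℂ, b ≠ 0 ∧ A = !![1, 0, a; 0, 1, -a; 0, 0, b]} := by
  set S := {A : Matrix (Fin 3) (Fin 3) ℂ |
      ∃ a b : ℂ, b ≠ 0 ∧ A = !![1, 0, a; 0, 1, -a; 0, 0, b]} with hS
  constructor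
  · rintro A ⟨a, b, hb, rfl⟩
    rw [Matrix.isUnit_iff_isUnit_det]
    have : (!![1, 0, a; 0, 1, -a; 0, 0, b] : Matrix (Fin 3) (Fin 3) ℂ).det = b := by
      simp [Matrix.det_fin_three, Matrix.vecHead, Matrix.vecTail]
    rw [this]
    exact hb.isUnit
  · -- path-connectedness
    have hC : IsPathConnected ({0}ᶜ : Set ℂ) :=
      isPathConnected_compl_singleton_of_one_lt_rank
        (by rw [Complex.rank_real_complex]; norm_num) 0
    refine ⟨!![1, 0, 0; 0, 1, -0; 0, 0, 1], ⟨0, 1, one_ne_zero, rfl⟩, ?_⟩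
    rintro A ⟨a, b, hb, rfl⟩
    -- first leg: change b from 1 to b (with a = 0)
    have h1 : JoinedIn S (!![1, 0, 0; 0, 1, -0; 0, 0, 1])
        (!![1, 0, 0; 0, 1, -0; 0, 0, b]) := by
      obtain ⟨γ, hγ⟩ := hC.joinedIn 1 one_ne_zero b hb
      refine ⟨γ.map (f := fun c => !![1, 0, (0:ℂ); 0, 1, -0; 0, 0, c]) ?_, ?_⟩
      · exact aut_L1_matrix_continuous.comp (continuous_const.prodMk continuous_id)
      · intro t
        exact ⟨0, γ t, hγ t, rfl⟩
    -- second leg: change a from 0 to a (with fixed b)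
    have h2 : JoinedIn S (!![1, 0, 0; 0, 1, -0; 0, 0, b])
        (!![1, 0, a; 0, 1, -a; 0, 0, b]) := by
      obtain ⟨γ⟩ := PathConnectedSpace.joined (0 : ℂ) a
      refine ⟨γ.map (f := fun c => !![1, 0, c; 0, 1, -c; 0, 0, b]) ?_, ?_⟩
      · exact aut_L1_matrix_continuous.comp (continuous_id.prodMk continuous_const)
      · intro t
        exact ⟨γ t, b, hb, rfl⟩
    exact h1.trans h2
end

section
/- Fix α ∈ ℂ. A ℂ-linear bijection σ : ℂ³ → ℂ³ is an automorphism of the ω-Lie algebra A_α if and only if there exists a ∈ ℂ such that σ(x) = x, σ(y) = a·x + y, and σ(z) = ((a² + a)/2)·x + a·y + z. Moreover, every automorphism of A_α is an ω-automorphism. -/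
noncomputable section

lemma V3_decomp (v : V3) : v = v 0 • vx + v 1 • vy + v 2 • vz := by
  funext i; fin_cases i <;> simp [vx, vy, vz]

lemma V3_indep {c0 c1 c2 : ℂ} (h : c0 • vx + c1 • vy + c2 • vz = 0) :
    c0 = 0 ∧ c1 = 0 ∧ c2 = 0 := by
  refine ⟨?_, ?_, ?_⟩
  · simpa [vx, vy, vz] using congrFun h 0
  · simpa [vx, vy, vz] using congrFun h 1
  · simpa [vx, vy, vz] using congrFun h 2

/-- A ℂ-linear bijection `σ : ℂ³ → ℂ³` is an automorphism of the ω-Lie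
algebra A_α (with `[x,y] = x`, `[x,z] = x + y`, `[y,z] = z + α•x`, `ω(x,y) = ω(x,z) = 0`,
`ω(y,z) = -1`) if and only if there is `a ∈ ℂ` with `σ x = x`, `σ y = a • x + y`,
`σ z = ((a² + a)/2) • x + a • y + z`; moreover every automorphism of A_α is an
ω-automorphism. -/
theorem automorphisms_A_alpha (α : ℂ)
    (b : V3 →ₗ[ℂ] V3 →ₗ[ℂ] V3) (w : V3 →ₗ[ℂ] V3 →ₗ[ℂ] ℂ)
    (hskew : ∀ u v : V3, b u v = - b v u)
    (hwskew : ∀ u v : V3, w u v = - w v u)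
    (hxy : b vx vy = vx) (hxz : b vx vz = vx + vy) (hyz : b vy vz = vz + α • vx)
    (hwxy : w vx vy = 0) (hwxz : w vx vz = 0) (hwyz : w vy vz = -1) :
    (∀ σ : V3 ≃ₗ[ℂ] V3,
        (∀ u v : V3, σ (b u v) = b (σ u) (σ v)) ↔
          ∃ a : ℂ, σ vx = vx ∧ σ vy = a • vx + vy ∧
            σ vz = ((a ^ 2 + a) / 2) • vx + a • vy + vz) ∧
    (∀ σ : V3 ≃ₗ[ℂ] V3, (∀ u v : V3, σ (b u v) = b (σ u) (σ v)) →
        ∀ u v : V3, w (σ u) (σ v) = w u v) := by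
  -- closed form of the bracket
  have hbuu : ∀ u : V3, b u u = 0 := by
    intro u
    have h := hskew u u
    have h2 : b u u + b u u = 0 := by nth_rewrite 2 [h]; exact add_neg_cancel _
    rw [← two_smul ℂ] at h2
    exact (smul_eq_zero.mp h2).resolve_left two_ne_zero
  have hyx : b vy vx = -vx := by rw [hskew, hxy]
  have hzx : b vz vx = -(vx + vy) := by rw [hskew, hxz]
  have hzy : b vz vy = -(vz + α • vx) := by rw [hskew, hyz]
  have hbf : ∀ u v : V3, b u v =
      (u 0 * v 1 - u 1 * v 0 + (u 0 * v 2 - u 2 * v 0) + α * (u 1 * v 2 - u 2 * v 1)) • vx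
      + (u 0 * v 2 - u 2 * v 0) • vy + (u 1 * v 2 - u 2 * v 1) • vz := by
    intro u v
    conv_lhs => rw [V3_decomp u, V3_decomp v]
    simp only [map_add, map_smul, LinearMap.add_apply, LinearMap.smul_apply, smul_smul,
      hxy, hxz, hyz, hyx, hzx, hzy, hbuu vx, hbuu vy, hbuu vz]
    module
  have hb0 : ∀ u v : V3, b u v 0 =
      u 0 * v 1 - u 1 * v 0 + (u 0 * v 2 - u 2 * v 0) + α * (u 1 * v 2 - u 2 * v 1) := by
    intro u v; rw [hbf]; simp [vx, vy, vz]
  have hb1 : ∀ u v : V3, b u v 1 = u 0 * v 2 - u 2 * v 0 := by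
    intro u v; rw [hbf]; simp [vx, vy, vz]
  have hb2 : ∀ u v : V3, b u v 2 = u 1 * v 2 - u 2 * v 1 := by
    intro u v; rw [hbf]; simp [vx, vy, vz]
  -- closed form of ω
  have hwyx : w vy vx = 0 := by rw [hwskew, hwxy, neg_zero]
  have hwzx : w vz vx = 0 := by rw [hwskew, hwxz, neg_zero]
  have hwzy : w vz vy = 1 := by rw [hwskew, hwyz, neg_neg]
  have hwuu : ∀ u : V3, w u u = 0 := by
    intro u
    have h := hwskew u u
    have h2 : w u u + w u u = 0 := by nth_rewrite 2 [h]; exact add_neg_cancel _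
    have : (2 : ℂ) * w u u = 0 := by rw [two_mul]; exact h2
    exact (mul_eq_zero.mp this).resolve_left two_ne_zero
  have hwf : ∀ u v : V3, w u v = u 2 * v 1 - u 1 * v 2 := by
    intro u v
    conv_lhs => rw [V3_decomp u, V3_decomp v]
    simp only [map_add, map_smul, LinearMap.add_apply, LinearMap.smul_apply, smul_eq_mul,
      hwxy, hwxz, hwyz, hwyx, hwzx, hwzy, hwuu vx, hwuu vy, hwuu vz]
    ring
  -- the ω-Jacobi identity
  have jacobi : ∀ u v t : V3, b (b u v) t + b (b v t) u + b (b t u) v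
      = w u v • t + w v t • u + w t u • v := by
    intro u v t
    funext i
    have h2 : (⟨2, by omega⟩ : Fin 3) = 2 := rfl
    have h1 : (⟨1, by omega⟩ : Fin 3) = 1 := rfl
    have h0 : (⟨0, by omega⟩ : Fin 3) = 0 := rfl
    fin_cases i <;>
      simp only [h0, h1, h2, Pi.add_apply, Pi.smul_apply, smul_eq_mul, hb0, hb1, hb2, hwf] <;>
      ring
  -- the form of images under an automorphism
  have hσform : ∀ (σ : V3 ≃ₗ[ℂ] V3) (a : ℂ), σ vx = vx → σ vy = a • vx + vy →
      σ vz = ((a ^ 2 + a) / 2) • vx + a • vy + vz →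
      ∀ u : V3, σ u = (u 0 + a * u 1 + ((a ^ 2 + a) / 2) * u 2) • vx
        + (u 1 + a * u 2) • vy + u 2 • vz := by
    intro σ a h1 h2 h3 u
    conv_lhs => rw [V3_decomp u]
    simp only [map_add, map_smul, h1, h2, h3]
    module
  -- forward direction of the iff
  have fwd : ∀ σ : V3 ≃ₗ[ℂ] V3, (∀ u v : V3, σ (b u v) = b (σ u) (σ v)) →
      ∃ a : ℂ, σ vx = vx ∧ σ vy = a • vx + vy ∧
        σ vz = ((a ^ 2 + a) / 2) • vx + a • vy + vz := by
    intro σ hσ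
    set p := σ vx with hp
    set q := σ vy with hq
    set r := σ vz with hr
    have hA : b p q = p := by rw [← hσ, hxy]
    have hB : b p r = p + q := by rw [← hσ, hxz, map_add]
    have hC : b q r = r + α • p := by rw [← hσ, hyz, map_add, map_smul]
    -- independence of p, q, r
    have indep : ∀ c0 c1 c2 : ℂ, c0 • p + c1 • q + c2 • r = 0 →
        c0 = 0 ∧ c1 = 0 ∧ c2 = 0 := by
      intro c0 c1 c2 h
      have h' : σ (c0 • vx + c1 • vy + c2 • vz) = σ 0 := by
        rw [map_zero]; rw [map_add, map_add, map_smul, map_smul, map_smul]; exact h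
      exact V3_indep (σ.injective h')
    -- Jacobi applied to p, q, r
    have hJ := jacobi p q r
    have hLHS : b (b p q) r + b (b q r) p + b (b r p) q = -p := by
      rw [hA, hB, hC]
      have h1 : b (r + α • p) p = -(p + q) := by
        have e : b (r + α • p) p = b r p + α • b p p := by
          simp only [map_add, LinearMap.add_apply, LinearMap.map_smul₂, LinearMap.smul_apply]
        rw [e, hbuu, smul_zero, add_zero, hskew, hB]
      have h2 : b (b r p) q = -p := by
        have hrp : b r p = -(p + q) := by rw [hskew, hB]
        rw [hrp, map_neg, LinearMap.neg_apply, map_add, LinearMap.add_apply, hA, hbuu,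
          add_zero]
      rw [h1, h2]
      module
    rw [hLHS] at hJ
    have hz : (w q r + 1) • p + w r p • q + w p q • r = 0 := by
      have : (w q r + 1) • p + w r p • q + w p q • r
          = (w p q • r + w q r • p + w r p • q) - (-p) := by module
      rw [this, ← hJ, sub_self]
    obtain ⟨hc0, hc1, hc2⟩ := indep _ _ _ hz
    have hwqr : w q r = -1 := by linear_combination hc0
    have hwrp : w r p = 0 := hc1
    have hwpq : w p q = 0 := hc2
    -- scalar equations
    have eA2 : p 1 * q 2 - p 2 * q 1 = p 2 := by
      have := congrFun hA 2; rw [hb2] at this; exact this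
    have eB1 : p 0 * r 2 - p 2 * r 0 = p 1 + q 1 := by
      have := congrFun hB 1; rw [hb1] at this; simpa using this
    have eB2 : p 1 * r 2 - p 2 * r 1 = p 2 + q 2 := by
      have := congrFun hB 2; rw [hb2] at this; simpa using this
    have eC0 : q 0 * r 1 - q 1 * r 0 + (q 0 * r 2 - q 2 * r 0)
        + α * (q 1 * r 2 - q 2 * r 1) = r 0 + α * p 0 := by
      have := congrFun hC 0; rw [hb0] at this; simpa [smul_eq_mul] using this
    have eC1 : q 0 * r 2 - q 2 * r 0 = r 1 + α * p 1 := by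
      have := congrFun hC 1; rw [hb1] at this; simpa [smul_eq_mul] using this
    have eC2 : q 1 * r 2 - q 2 * r 1 = r 2 + α * p 2 := by
      have := congrFun hC 2; rw [hb2] at this; simpa [smul_eq_mul] using this
    have hwpq' : p 2 * q 1 - p 1 * q 2 = 0 := by rw [← hwf]; exact hwpq
    have hwqr' : q 2 * r 1 - q 1 * r 2 = -1 := by rw [← hwf]; exact hwqr
    have hwrp' : r 2 * p 1 - r 1 * p 2 = 0 := by rw [← hwf]; exact hwrp
    -- solve
    have hp2 : p 2 = 0 := by linear_combination -eA2 - hwpq'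
    have hr2 : r 2 = 1 := by linear_combination -eC2 - hwqr' - α * hp2
    have hp1 : p 1 = 0 := by linear_combination hwrp' - p 1 * hr2 + r 1 * hp2
    have hq2 : q 2 = 0 := by linear_combination -eB2 + r 2 * hp1 - (r 1 + 1) * hp2
    have hq1 : q 1 = 1 := by
      linear_combination -hwqr' - q 1 * hr2 + r 1 * hq2
    have hp0 : p 0 = 1 := by
      linear_combination eB1 - p 0 * hr2 + r 0 * hp2 + hp1 + hq1
    have hr1 : r 1 = q 0 := by
      linear_combination -eC1 + q 0 * hr2 - r 0 * hq2 - α * hp1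
    have hr0 : r 0 = (q 0 ^ 2 + q 0) / 2 := by
      linear_combination (-1/2) * eC0 + (q 0 / 2) * hr1 + ((-(r 0) - α * r 2)/2) * hq1
        + ((q 0 + α)/2) * hr2 + ((-(r 0) - α * r 1)/2) * hq2 + (-α/2) * hp0 + (α * r 2) * hq1
    refine ⟨q 0, ?_, ?_, ?_⟩
    · funext i; fin_cases i <;> simp [← hp, vx, hp0, hp1, hp2]
    · funext i; fin_cases i <;> simp [← hq, vx, vy, hq1, hq2]
    · funext i; fin_cases i <;> simp [← hr, vx, vy, vz, hr0, hr1, hr2]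
  -- backward direction
  have bwd : ∀ σ : V3 ≃ₗ[ℂ] V3, ∀ a : ℂ, σ vx = vx → σ vy = a • vx + vy →
      σ vz = ((a ^ 2 + a) / 2) • vx + a • vy + vz →
      ∀ u v : V3, σ (b u v) = b (σ u) (σ v) := by
    intro σ a h1 h2 h3 u v
    have hform := hσform σ a h1 h2 h3
    funext i
    have hσc0 : ∀ u : V3, σ u 0 = u 0 + a * u 1 + ((a ^ 2 + a) / 2) * u 2 := by
      intro u; rw [hform u]; simp [vx, vy, vz]
    have hσc1 : ∀ u : V3, σ u 1 = u 1 + a * u 2 := by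
      intro u; rw [hform u]; simp [vx, vy, vz]
    have hσc2 : ∀ u : V3, σ u 2 = u 2 := by
      intro u; rw [hform u]; simp [vx, vy, vz]
    fin_cases i <;>
      simp only [show (⟨0, by omega⟩ : Fin 3) = 0 from rfl,
        show (⟨1, by omega⟩ : Fin 3) = 1 from rfl,
        show (⟨2, by omega⟩ : Fin 3) = 2 from rfl,
        hσc0, hσc1, hσc2, hb0, hb1, hb2] <;> ring
  constructor
  · intro σ
    constructor
    · exact fwd σ
    · rintro ⟨a, h1, h2, h3⟩; exact bwd σ a h1 h2 h3
  · intro σ hσ u v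
    obtain ⟨a, h1, h2, h3⟩ := fwd σ hσ
    have hform := hσform σ a h1 h2 h3
    have hσc1 : ∀ u : V3, σ u 1 = u 1 + a * u 2 := by
      intro u; rw [hform u]; simp [vx, vy, vz]
    have hσc2 : ∀ u : V3, σ u 2 = u 2 := by
      intro u; rw [hform u]; simp [vx, vy, vz]
    rw [hwf, hwf, hσc1, hσc1, hσc2, hσc2]
    ring
end
end

section
/- Let g be a finite-dimensional complex ω-Lie algebra and V a g-module with action (x,v) ↦ x·v. Define on the direct sum g ⊕ V the skew-symmetric bilinear bracket [(x,v),(y,u)] := ([x,y], x·u − y·v) and the bilinear form Ω((x,v),(y,u)) := ω(x,y). Then (g ⊕ V, [-,-], Ω) satisfies the Ω-Jacobi identity, i.e. it is an Ω-Lie algebra (the semi-direct product of g and V). -/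
variable {g V : Type*} [AddCommGroup g] [Module ℂ g] [AddCommGroup V] [Module ℂ V]

/-- The semi-direct product bracket on `g ⊕ V`:
`[(x,v),(y,u)] = ([x,y], x·u - y·v)`. -/
def sdBracket (bracket : g →ₗ[ℂ] g →ₗ[ℂ] g) (ρ : g →ₗ[ℂ] V →ₗ[ℂ] V) :
    g × V → g × V → g × V :=
  fun p q => (bracket p.1 q.1, ρ p.1 q.2 - ρ q.1 p.2)

/-- If `g` is a finite-dimensional complex ω-Lie algebra and `V` a
`g`-module, then the semi-direct product bracket on `g ⊕ V`, together with the bilinear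
form `Ω((x,v),(y,u)) := ω(x,y)`, is skew-symmetric and satisfies the Ω-Jacobi identity,
i.e. `g ⊕ V` is an Ω-Lie algebra. -/
theorem semidirect_product_is_omega_lie_algebra
    [FiniteDimensional ℂ g] [FiniteDimensional ℂ V]
    (bracket : g →ₗ[ℂ] g →ₗ[ℂ] g) (ω : g →ₗ[ℂ] g →ₗ[ℂ] ℂ)
    (hskew : ∀ u v : g, bracket u v = - bracket v u)
    (hjacobi : ∀ u v w : g,
      bracket (bracket u v) w + bracket (bracket v w) u + bracket (bracket w u) v
        = ω u v • w + ω v w • u + ω w u • v)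
    (ρ : g →ₗ[ℂ] V →ₗ[ℂ] V)
    (hmod : ∀ (x y : g) (v : V), ρ (bracket x y) v = ρ x (ρ y v) - ρ y (ρ x v) + ω x y • v) :
    (∀ p q : g × V, sdBracket bracket ρ p q = - sdBracket bracket ρ q p) ∧
    (∀ p q r : g × V,
      sdBracket bracket ρ (sdBracket bracket ρ p q) r +
        sdBracket bracket ρ (sdBracket bracket ρ q r) p +
        sdBracket bracket ρ (sdBracket bracket ρ r p) q
        = ω p.1 q.1 • r + ω q.1 r.1 • p + ω r.1 p.1 • q) := by
  constructor
  · intro p q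
    simp only [sdBracket, Prod.neg_mk, Prod.mk.injEq]
    exact ⟨hskew _ _, by abel⟩
  · intro p q r
    obtain ⟨x, a⟩ := p; obtain ⟨y, b⟩ := q; obtain ⟨z, c⟩ := r
    simp only [sdBracket, Prod.mk_add_mk, Prod.smul_mk, Prod.mk.injEq]
    refine ⟨hjacobi x y z, ?_⟩
    simp only [hmod, map_sub, map_add, map_smul]
    abel
end

section
/- Let g be a finite-dimensional complex ω-Lie algebra. Then ℂ is a 1-dimensional g-module (i.e. there exists a bilinear map g × ℂ → ℂ, (x,c) ↦ x·c, satisfying [x,y]·c = x·(y·c) − y·(x·c) + ω(x,y)·c for all x,y ∈ g, c ∈ ℂ) if and only if there exists a ℂ-linear functional τ : g → ℂ such that ω(x,y) = τ([x,y]) for all x,y ∈ g. -/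
/-- A finite-dimensional complex ω-Lie algebra `g` admits a 1-dimensional
module structure on ℂ (i.e. a bilinear action `g × ℂ → ℂ` with
`[x,y]·c = x·(y·c) - y·(x·c) + ω(x,y)·c`) if and only if there is a ℂ-linear functional
`τ : g → ℂ` with `ω(x,y) = τ([x,y])` for all `x, y ∈ g`. -/
theorem one_dimensional_module_iff_omega_eq_tau_bracket
    (g : Type*) [AddCommGroup g] [Module ℂ g] [FiniteDimensional ℂ g]
    (bracket : g →ₗ[ℂ] g →ₗ[ℂ] g) (ω : g →ₗ[ℂ] g →ₗ[ℂ] ℂ)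
    (hskew : ∀ u v : g, bracket u v = - bracket v u)
    (hjacobi : ∀ u v w : g,
      bracket (bracket u v) w + bracket (bracket v w) u + bracket (bracket w u) v
        = ω u v • w + ω v w • u + ω w u • v) :
    (∃ ρ : g →ₗ[ℂ] ℂ →ₗ[ℂ] ℂ,
        ∀ (x y : g) (c : ℂ),
          ρ (bracket x y) c = ρ x (ρ y c) - ρ y (ρ x c) + ω x y * c) ↔
    (∃ τ : g →ₗ[ℂ] ℂ, ∀ x y : g, ω x y = τ (bracket x y)) := by
  constructor
  · rintro ⟨ρ, hρ⟩
    refine ⟨ρ.flip 1, fun x y => ?_⟩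
    have h := hρ x y 1
    have hx : ∀ z : g, ρ z (ρ x 1) = ρ x 1 * ρ z 1 := fun z => by
      have := (ρ z).map_smul (ρ x 1) 1
      simpa [smul_eq_mul] using this
    simp only [LinearMap.flip_apply]
    have h1 : ρ x (ρ y 1) = ρ y 1 * ρ x 1 := by
      have := (ρ x).map_smul (ρ y 1) 1
      simpa [smul_eq_mul] using this
    have h2 : ρ y (ρ x 1) = ρ x 1 * ρ y 1 := by
      have := (ρ y).map_smul (ρ x 1) 1
      simpa [smul_eq_mul] using this
    rw [h1, h2, mul_comm] at h
    simp at h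
    exact h.symm
  · rintro ⟨τ, hτ⟩
    refine ⟨(LinearMap.mul ℂ ℂ).comp τ, fun x y c => ?_⟩
    simp [LinearMap.mul_apply', hτ x y]
    ring
end

section
/- Fix α ∈ ℂ with α ≠ 0 and α ≠ −1. Let V be a nonzero finite-dimensional complex vector space equipped with a bilinear action ℂ³ × V → V, (w,v) ↦ w·v, of the ω-Lie algebra C_α satisfying [w₁,w₂]·v = w₁·(w₂·v) − w₂·(w₁·v) + ω(w₁,w₂)·v for all w₁,w₂ ∈ ℂ³ and v ∈ V. If V is irreducible (i.e. the only subspaces V₀ ⊆ V with w·v ∈ V₀ for all w ∈ ℂ³ and v ∈ V₀ are {0} and V), then dim_ℂ V = 1. -/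
noncomputable section

/-- For `α ∈ ℂ` with `α ≠ 0, -1`, every irreducible module `V` over the
ω-Lie algebra C_α (with `[x,y] = y`, `[x,z] = α•z`, `[y,z] = x`, `ω(x,y) = ω(x,z) = 0`,
`ω(y,z) = 1 + α`) is 1-dimensional. -/
theorem irreducible_C_alpha_module_is_one_dimensional
    (α : ℂ) (hα0 : α ≠ 0) (hα1 : α ≠ -1)
    (b : V3 →ₗ[ℂ] V3 →ₗ[ℂ] V3) (w : V3 →ₗ[ℂ] V3 →ₗ[ℂ] ℂ)
    (hskew : ∀ u v : V3, b u v = - b v u)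
    (hwskew : ∀ u v : V3, w u v = - w v u)
    (hxy : b vx vy = vy) (hxz : b vx vz = α • vz) (hyz : b vy vz = vx)
    (hwxy : w vx vy = 0) (hwxz : w vx vz = 0) (hwyz : w vy vz = 1 + α)
    (V : Type*) [AddCommGroup V] [Module ℂ V] [FiniteDimensional ℂ V] [Nontrivial V]
    (ρ : V3 →ₗ[ℂ] V →ₗ[ℂ] V)
    (hmod : ∀ (p q : V3) (v : V), ρ (b p q) v = ρ p (ρ q v) - ρ q (ρ p v) + w p q • v)
    (hirr : ∀ V₀ : Submodule ℂ V, (∀ (p : V3), ∀ v ∈ V₀, ρ p v ∈ V₀) →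
      V₀ = ⊥ ∨ V₀ = ⊤) :
    Module.finrank ℂ V = 1 := by
  set X : V →ₗ[ℂ] V := ρ vx with hX
  set Y : V →ₗ[ℂ] V := ρ vy with hY
  set Z : V →ₗ[ℂ] V := ρ vz with hZ
  -- pointwise structure relations
  have r1 : ∀ v : V, X (Y v) - Y (X v) = Y v := by
    intro v
    have h := hmod vx vy v
    rw [hxy, hwxy] at h
    simp only [zero_smul, add_zero] at h
    exact h.symm
  have r2 : ∀ v : V, X (Z v) - Z (X v) = α • Z v := by
    intro v
    have h := hmod vx vz v
    rw [hxz, hwxz, map_smul] at h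
    simp only [zero_smul, add_zero, LinearMap.smul_apply] at h
    exact h.symm
  have r3 : ∀ v : V, Y (Z v) - Z (Y v) + (1 + α) • v = X v := by
    intro v
    have h := hmod vy vz v
    rw [hyz, hwyz] at h
    exact h.symm
  -- X is the scalar (1+α)
  have hXs : ∀ v : V, X v = (1 + α) • v := by
    intro v
    have a3 := r1 (Z v)
    have a4 := r2 (Y v)
    have a5 := r3 v
    have a6 := r3 (X v)
    have b1 : Y (X (Z v)) - Y (Z (X v)) = α • Y (Z v) := by
      have := congrArg Y (r2 v)
      simpa [map_sub, map_smul] using this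
    have b2 : Z (X (Y v)) - Z (Y (X v)) = Z (Y v) := by
      have := congrArg Z (r1 v)
      simpa [map_sub] using this
    have c6 : X (Y (Z v)) - X (Z (Y v)) + (1 + α) • X v = X (X v) := by
      have := congrArg X (r3 v)
      simpa [map_add, map_sub, map_smul] using this
    have hD : (1 + α) • (Y (Z v) - Z (Y v)) = 0 := by
      linear_combination (norm := module) -a3 + a4 - b1 + b2 - a6 + c6
    have h1α : (1 : ℂ) + α ≠ 0 := by
      intro h; apply hα1; linear_combination h
    have hD0 : Y (Z v) - Z (Y v) = 0 := by
      rcases smul_eq_zero.mp hD with h | h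
      · exact absurd h h1α
      · exact h
    rw [← a5, hD0, zero_add]
  -- hence Y = 0 and Z = 0
  have hY0 : ∀ v : V, Y v = 0 := by
    intro v
    have h := r1 v
    rw [hXs (Y v), hXs v, map_smul] at h
    simpa using h.symm
  have hZ0 : ∀ v : V, Z v = 0 := by
    intro v
    have h := r2 v
    rw [hXs (Z v), hXs v, map_smul] at h
    simp only [sub_self] at h
    exact (smul_eq_zero.mp h.symm).resolve_left hα0
  -- every p acts as a scalar
  have hbasis : ∀ p : V3, p = p 0 • vx + p 1 • vy + p 2 • vz := by
    intro p; funext i; fin_cases i <;> simp [vx, vy, vz]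
  have hscal : ∀ (p : V3) (v : V), ρ p v = (p 0 * (1 + α)) • v := by
    intro p v
    conv_lhs => rw [hbasis p]
    rw [map_add, map_add, map_smul, map_smul, map_smul]
    simp only [LinearMap.add_apply, LinearMap.smul_apply]
    rw [← hX, ← hY, ← hZ, hXs v, hY0 v, hZ0 v]
    simp [smul_smul]
  -- conclude
  obtain ⟨v, hv⟩ := exists_ne (0 : V)
  have hinv : ∀ (p : V3), ∀ u ∈ (ℂ ∙ v), ρ p u ∈ (ℂ ∙ v) := by
    intro p u hu
    rw [hscal p u]
    exact Submodule.smul_mem _ _ hu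
  rcases hirr (ℂ ∙ v) hinv with h | h
  · exfalso
    have : v ∈ (ℂ ∙ v) := Submodule.mem_span_singleton_self v
    rw [h] at this
    exact hv (Submodule.mem_bot ℂ |>.mp this)
  · rw [← finrank_top ℂ V, ← h, finrank_span_singleton hv]
end
end
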